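/- arXiv:1603.05895 — 2 statements merged into one kernel-verified Lean document; each statement's English description precedes it below -/
import Mathlib

section
/- Suppose Δ(ε) → 0 as ε → 0⁺, M < ∞, |ζ(ε)| ≤ 1, and 1 = φ₀(ε) + Δ(ε)φ₁(ε) + (Δ(ε)²/2)φ₂(ε) + Δ(ε)³·M·ζ(ε), where φ₀(ε) = 1 + b₀₁ε + b₀₂ε² + o(ε²), φ₁(ε) = b₁₀ + b₁₁ε + o(ε) with b₁₀ > 0, and φ₂(ε) = b₂₀ + o(1). Then Δ(ε) = c₁ε + c₂ε² + o(ε²) with c₁ = −b₀₁/b₁₀ and c₂ = −(b₀₂ + b₁₁c₁ + b₂₀c₁²/2)/b₁₀. -/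
open Filter Topology

/-!
Up to terms of higher order the characteristic equation is linear in `Δ`: it reads
`1 - φ₀ = Δ * (φ₁ + Δ φ₂ / 2 + Δ² M ζ)`, and the bracket tends to `b₁₀ ≠ 0`, so dividing by `ε`
gives `Δ / ε → c₁`. Rewriting the equation as
`(Δ - c₁ ε) φ₁ = -(φ₀ - 1 + c₁ ε φ₁ + Δ² φ₂ / 2 + Δ³ M ζ)` and dividing by `ε²`, the singular
`1 / ε` terms on the right cancel because `b₀₁ + c₁ b₁₀ = 0`, and the remaining terms converge,
which gives `(Δ - c₁ ε) / ε² → c₂`.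
-/

section Filter

variable {α : Type*} {l : Filter α}

theorem tendsto_div_of_eq_mul {𝕜 : Type*} [NormedField 𝕜] {N D g w : α → 𝕜} {a b : 𝕜}
    (hN : Tendsto (fun x => N x / w x) l (𝓝 a)) (hg : Tendsto g l (𝓝 b)) (hb : b ≠ 0)
    (h : ∀ᶠ x in l, N x = D x * g x) : Tendsto (fun x => D x / w x) l (𝓝 (a / b)) := by
  refine (hN.div hg hb).congr' ?_
  filter_upwards [h, hg.eventually_ne hb] with x hx hgx
  simp only [Pi.div_apply, hx]
  field_simp

theorem tendsto_mul_zero_of_abs_le_one {u ζ : α → ℝ} (hu : Tendsto u l (𝓝 0))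
    (hζ : ∀ x, |ζ x| ≤ 1) : Tendsto (fun x => u x * ζ x) l (𝓝 0) :=
  hu.zero_mul_isBoundedUnder_le (isBoundedUnder_of_eventually_le (Eventually.of_forall hζ))

end Filter

section Expansion

variable {𝕜 : Type*} [NormedField 𝕜] {l : Filter 𝕜} {f g : 𝕜 → 𝕜} {a b c a' b' k : 𝕜}

theorem tendsto_of_tendsto_sub_div_self (hl : l ≤ 𝓝[≠] 0)
    (hfg : Tendsto (fun ε => (f ε - g ε) / ε) l (𝓝 0)) (hg : Tendsto g l (𝓝 a)) :
    Tendsto f l (𝓝 a) := by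
  have hε : Tendsto (fun ε : 𝕜 => ε) l (𝓝 0) := tendsto_id.mono_left (hl.trans nhdsWithin_le_nhds)
  have h := (hfg.mul hε).add hg
  rw [zero_mul, zero_add] at h
  refine h.congr' ?_
  filter_upwards [hl self_mem_nhdsWithin] with ε (hε0 : ε ≠ 0)
  rw [div_mul_cancel₀ _ hε0, sub_add_cancel]

theorem tendsto_of_tendsto_sub_linear_div (hl : l ≤ 𝓝[≠] 0)
    (hf : Tendsto (fun ε => (f ε - a - b * ε) / ε) l (𝓝 0)) : Tendsto f l (𝓝 a) := by
  refine tendsto_of_tendsto_sub_div_self hl (g := fun ε => a + b * ε) ?_ ?_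
  · simpa only [sub_sub] using hf
  · simpa using (tendsto_id.mono_left (hl.trans nhdsWithin_le_nhds)).const_mul b |>.const_add a

theorem tendsto_sub_div_of_tendsto_sub_quadratic_div_sq (hl : l ≤ 𝓝[≠] 0)
    (hf : Tendsto (fun ε => (f ε - a - b * ε - c * ε ^ 2) / ε ^ 2) l (𝓝 0)) :
    Tendsto (fun ε => (f ε - a) / ε) l (𝓝 b) := by
  refine tendsto_of_tendsto_sub_linear_div hl (b := c) (hf.congr' ?_)
  filter_upwards [hl self_mem_nhdsWithin] with ε (hε0 : ε ≠ 0)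
  field_simp

theorem tendsto_sub_div_sq_add_mul_div (hl : l ≤ 𝓝[≠] 0)
    (hf : Tendsto (fun ε => (f ε - a - b * ε - c * ε ^ 2) / ε ^ 2) l (𝓝 0))
    (hg : Tendsto (fun ε => (g ε - a' - b' * ε) / ε) l (𝓝 0)) (hk : b + k * a' = 0) :
    Tendsto (fun ε => (f ε - a) / ε ^ 2 + k * g ε / ε) l (𝓝 (c + k * b')) := by
  have h := ((hf.add_const c).add (hg.const_mul k)).add_const (k * b')
  rw [zero_add, mul_zero, add_zero] at h
  refine h.congr' ?_
  filter_upwards [hl self_mem_nhdsWithin] with ε (hε0 : ε ≠ 0)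
  field_simp
  linear_combination (-ε) * hk

end Expansion

section Root

variable {l : Filter ℝ} {Δ φ₀ φ₁ φ₂ ζ : ℝ → ℝ} {M a b01 b10 b20 c₁ : ℝ}

theorem tendsto_root_div_self (hΔ : Tendsto Δ l (𝓝 0)) (hζ : ∀ ε, |ζ ε| ≤ 1)
    (heq : ∀ᶠ ε in l, 1 = φ₀ ε + Δ ε * φ₁ ε + Δ ε ^ 2 / 2 * φ₂ ε + Δ ε ^ 3 * M * ζ ε)
    (hφ₀ : Tendsto (fun ε => (φ₀ ε - 1) / ε) l (𝓝 b01)) (hφ₁ : Tendsto φ₁ l (𝓝 b10))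
    (hb10 : b10 ≠ 0) (hφ₂ : Tendsto φ₂ l (𝓝 b20)) :
    Tendsto (fun ε => Δ ε / ε) l (𝓝 (-b01 / b10)) := by
  have hg : Tendsto (fun ε => φ₁ ε + Δ ε * φ₂ ε / 2 + Δ ε ^ 2 * M * ζ ε) l (𝓝 b10) := by
    have hr := tendsto_mul_zero_of_abs_le_one (by simpa using (hΔ.pow 2).mul_const M) hζ
    simpa using (hφ₁.add ((hΔ.mul hφ₂).div_const 2)).add hr
  refine tendsto_div_of_eq_mul (N := fun ε => 1 - φ₀ ε) ?_ hg hb10 ?_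
  · simpa only [← neg_div, neg_sub] using hφ₀.neg
  · filter_upwards [heq] with ε h
    linear_combination h

theorem tendsto_root_sub_div_sq (hl : l ≤ 𝓝[≠] 0) (hΔ : Tendsto Δ l (𝓝 0))
    (hΔ₁ : Tendsto (fun ε => Δ ε / ε) l (𝓝 c₁)) (hζ : ∀ ε, |ζ ε| ≤ 1)
    (heq : ∀ᶠ ε in l, 1 = φ₀ ε + Δ ε * φ₁ ε + Δ ε ^ 2 / 2 * φ₂ ε + Δ ε ^ 3 * M * ζ ε)
    (hφ₀₁ : Tendsto (fun ε => (φ₀ ε - 1) / ε ^ 2 + c₁ * φ₁ ε / ε) l (𝓝 a))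
    (hφ₁ : Tendsto φ₁ l (𝓝 b10)) (hb10 : b10 ≠ 0) (hφ₂ : Tendsto φ₂ l (𝓝 b20)) :
    Tendsto (fun ε => (Δ ε - c₁ * ε) / ε ^ 2) l (𝓝 (-(a + b20 * c₁ ^ 2 / 2) / b10)) := by
  have hr := tendsto_mul_zero_of_abs_le_one (by simpa using ((hΔ₁.pow 2).mul hΔ).mul_const M) hζ
  have hN := ((hφ₀₁.add (((hΔ₁.pow 2).div_const 2).mul hφ₂)).add hr).neg
  rw [add_zero, show c₁ ^ 2 / 2 * b20 = b20 * c₁ ^ 2 / 2 by ring] at hN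
  refine tendsto_div_of_eq_mul (hN.congr' ?_) hφ₁ hb10 (N := fun ε =>
    -(φ₀ ε - 1 + c₁ * ε * φ₁ ε + Δ ε ^ 2 / 2 * φ₂ ε + Δ ε ^ 3 * M * ζ ε)) ?_
  · filter_upwards [hl self_mem_nhdsWithin] with ε (hε0 : ε ≠ 0)
    field_simp
  · filter_upwards [heq] with ε h
    linear_combination h

end Root

theorem root_expansion_second_order
    (Δ φ₀ φ₁ φ₂ ζ : ℝ → ℝ) (M b01 b02 b10 b11 b20 : ℝ) (hb10 : 0 < b10)
    (hΔ : Tendsto Δ (nhdsWithin 0 (Set.Ioi 0)) (nhds 0))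
    (hζ : ∀ ε, |ζ ε| ≤ 1)
    (heq : ∀ᶠ ε in nhdsWithin 0 (Set.Ioi 0),
      1 = φ₀ ε + Δ ε * φ₁ ε + (Δ ε) ^ 2 / 2 * φ₂ ε + (Δ ε) ^ 3 * M * ζ ε)
    (hφ₀ : Tendsto (fun ε => (φ₀ ε - 1 - b01 * ε - b02 * ε ^ 2) / ε ^ 2)
      (nhdsWithin 0 (Set.Ioi 0)) (nhds 0))
    (hφ₁ : Tendsto (fun ε => (φ₁ ε - b10 - b11 * ε) / ε)
      (nhdsWithin 0 (Set.Ioi 0)) (nhds 0))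
    (hφ₂ : Tendsto φ₂ (nhdsWithin 0 (Set.Ioi 0)) (nhds b20)) :
    ∃ c₁ c₂ : ℝ, c₁ = -b01 / b10 ∧
      c₂ = -(b02 + b11 * c₁ + b20 * c₁ ^ 2 / 2) / b10 ∧
      Tendsto (fun ε => (Δ ε - c₁ * ε - c₂ * ε ^ 2) / ε ^ 2)
        (nhdsWithin 0 (Set.Ioi 0)) (nhds 0) := by
  have hl : 𝓝[>] (0 : ℝ) ≤ 𝓝[≠] 0 := nhdsWithin_mono _ fun ε hε => ne_of_gt hε
  have hφ₁lim := tendsto_of_tendsto_sub_linear_div hl hφ₁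
  have hφ₀lim := tendsto_sub_div_of_tendsto_sub_quadratic_div_sq hl hφ₀
  have hΔ₁ := tendsto_root_div_self hΔ hζ heq hφ₀lim hφ₁lim hb10.ne' hφ₂
  have hφ₀₁ := tendsto_sub_div_sq_add_mul_div hl hφ₀ hφ₁ (k := -b01 / b10) (by field_simp; ring)
  have hΔ₂ := tendsto_root_sub_div_sq hl hΔ hΔ₁ hζ heq hφ₀₁ hφ₁lim hb10.ne' hφ₂
  refine ⟨_, _, rfl, rfl, ?_⟩
  refine (tendsto_sub_nhds_zero_iff.2 hΔ₂).congr' ?_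
  filter_upwards [hl self_mem_nhdsWithin] with ε (hε0 : ε ≠ 0)
  field_simp
end

section
/- Let g : ℕ → ℝ≥0 be a proper, non-periodic probability distribution on the positive integers with finite mean m = Σ_n n·g(n) < ∞, and let h : ℕ → ℝ≥0 satisfy Σ_n h(n) < ∞. If x : ℕ → ℝ≥0 is bounded and satisfies the renewal equation x(n) = h(n) + Σ_{k=0}^{n} x(n−k)g(k) for all n, then x(n) → (Σ_{k=0}^{∞} h(k))/m as n → ∞. -/
/-!
Let `u` be the renewal sequence, the coefficients of `1 / (1 - G)` for `G = ∑ gₙ Xⁿ`. As power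
series the renewal equation reads `X = H + G X`, so `X = H U`: `x` is the convolution of `h`
with `u`, and by dominated convergence it suffices that `uₙ → 1 / m`.

This is the Erdős–Feller–Pollard argument. Along a subsequence realising an extremal cluster
point `c` of `u` (its limsup or its liminf), a diagonal extraction makes every shift `u (n - j)`
converge, to `w j` say. Then `w j = ∑ₖ gₖ w (j + k)` and `w 0 = c` is extremal, so the maximum
principle spreads `w j = c` over the additive semigroup generated by the support of `g`, which
contains every large integer because that support has gcd 1. Finally the identity
`∑_{k ≤ n} rₖ u (n - k) = 1`, where the tails `rₖ = ∑_{i > k} gᵢ` add up to the mean `m`,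
forces `c m = 1`.
-/

open Filter Topology PowerSeries
open Finset hiding mk

theorem PowerSeries.mk_eq_add_mk_mul_iff {R : Type*} [CommRing R] {g h x : ℕ → R} :
    mk x = mk h + mk g * mk x ↔ ∀ n, x n = h n + ∑ m ∈ range (n + 1), x (n - m) * g m := by
  simp only [PowerSeries.ext_iff, coeff_mk, map_add, coeff_mul,
    Nat.sum_antidiagonal_eq_sum_range_succ_mk, mul_comm (g _)]

theorem Nat.setGcd_eq_one_of_forall_not_dvd {s : Set ℕ}
    (hs : ∀ d : ℕ, 1 < d → ∃ n ∈ s, ¬ d ∣ n) : Nat.setGcd s = 1 :=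
  Nat.eq_one_iff_not_exists_prime_dvd.2 fun p hp hdvd =>
    let ⟨n, hn, hnd⟩ := hs p hp.one_lt
    hnd (Nat.dvd_setGcd_iff.1 hdvd n hn)

theorem Nat.eventually_mem_of_add_mem {S A : Set ℕ} (hS : Nat.setGcd S = 1) (h0 : 0 ∈ A)
    (hA : ∀ a ∈ A, ∀ s ∈ S, a + s ∈ A) : ∀ᶠ n in atTop, n ∈ A := by
  let M : AddSubmonoid ℕ :=
    { carrier := {m | ∀ a ∈ A, a + m ∈ A}
      add_mem' := fun hm hm' a ha => add_assoc a _ _ ▸ hm' _ (hm a ha)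
      zero_mem' := fun a ha => ha }
  have hSM : AddSubmonoid.closure S ≤ M := AddSubmonoid.closure_le.2 fun s hs a ha => hA a ha s hs
  obtain ⟨N, hN⟩ := Nat.exists_mem_closure_of_ge S
  exact eventually_atTop.2 ⟨N, fun n hn => by simpa using hSM (hN n hn (hS ▸ one_dvd n)) 0 h0⟩

theorem exists_subseq_tendsto_shifts {u : ℕ → ℝ} {a b : ℝ} (hu : ∀ n, u n ∈ Set.Icc a b)
    (φ : ℕ → ℕ) : ∃ σ : ℕ → ℕ, StrictMono σ ∧ ∃ w : ℕ → ℝ,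
      ∀ j, Tendsto (fun ν => u (φ (σ ν) - j)) atTop (𝓝 (w j)) := by
  obtain ⟨w, -, σ, hσ, hlim⟩ := (isCompact_univ_pi fun _ => isCompact_Icc).tendsto_subseq
    (x := fun ν j => u (φ ν - j)) fun ν j _ => hu _
  exact ⟨σ, hσ, w, tendsto_pi_nhds.1 hlim⟩

theorem tendsto_sum_range_mul {ι : Type*} {l : Filter ι} {h F : ℕ → ℝ} {f : ι → ℕ → ℝ}
    {N : ι → ℕ} {C : ℝ} (hh : Summable h) (hN : Tendsto N l atTop)
    (hf : ∀ k, Tendsto (f · k) l (𝓝 (F k))) (hC : ∀ i k, |f i k| ≤ C) :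
    Tendsto (fun i => ∑ k ∈ range (N i + 1), h k * f i k) l (𝓝 (∑' k, h k * F k)) := by
  refine (tendsto_tsum_of_dominated_convergence (hh.abs.mul_right C)
    (f := fun i => (range (N i + 1) : Set ℕ).indicator fun k => h k * f i k) (fun k => ?_)
    (Eventually.of_forall fun i k => ?_)).congr fun i => (sum_eq_tsum_indicator _ _).symm
  · refine ((hf k).const_mul (h k)).congr' ?_
    filter_upwards [hN.eventually_ge_atTop k] with i hi
    rw [Set.indicator_of_mem (by simpa [Nat.lt_succ_iff] using hi)]
  · refine (norm_indicator_le_norm_self _ _).trans ?_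
    rw [Real.norm_eq_abs, abs_mul]
    exact mul_le_mul_of_nonneg_left (hC i k) (abs_nonneg _)

theorem eq_tsum_mul_shift_of_tendsto {g u w : ℕ → ℝ} {θ : ℕ → ℕ} {C : ℝ} (hg : Summable g)
    (hu : ∀ n, 0 < n → u n = ∑ m ∈ range (n + 1), u (n - m) * g m) (hC : ∀ n, |u n| ≤ C)
    (hθ : Tendsto θ atTop atTop) (hw : ∀ j, Tendsto (fun ν => u (θ ν - j)) atTop (𝓝 (w j)))
    (j : ℕ) : w j = ∑' k, g k * w (j + k) := by
  have hN : Tendsto (fun ν => θ ν - j) atTop atTop := (tendsto_sub_atTop_nat j).comp hθ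
  refine tendsto_nhds_unique (hw j) ((tendsto_sum_range_mul hg hN
    (f := fun ν k => u (θ ν - j - k)) (fun k => ?_) fun _ _ => hC _).congr' ?_)
  · simpa [Nat.sub_sub] using hw (j + k)
  · filter_upwards [hN.eventually_gt_atTop 0] with ν hν
    rw [hu _ hν]
    simp_rw [mul_comm (g _)]

theorem eq_of_tsum_mul_shift_eq_of_le {g w : ℕ → ℝ} {c C : ℝ} (hgnn : ∀ n, 0 ≤ g n)
    (hg : HasSum g 1) (hw : ∀ j, w j = ∑' k, g k * w (j + k)) (hC : ∀ j, |w j| ≤ C)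
    (hle : ∀ j, w j ≤ c) {j k : ℕ} (hj : w j = c) (hk : 0 < g k) : w (j + k) = c := by
  have hsum : Summable fun i => g i * w (j + i) :=
    (hg.summable.mul_right C).of_norm_bounded fun i => by
      rw [norm_mul, Real.norm_eq_abs, abs_of_nonneg (hgnn i)]
      exact mul_le_mul_of_nonneg_left (hC _) (hgnn i)
  have hdefect : HasSum (fun i => g i * (c - w (j + i))) 0 := by
    have h := (hg.mul_right c).sub hsum.hasSum
    rw [← hw, hj, one_mul, sub_self] at h
    simpa only [mul_sub] using h
  have := congrFun ((hasSum_zero_iff_of_nonneg fun i =>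
    mul_nonneg (hgnn i) (sub_nonneg.2 (hle _))).1 hdefect) k
  simpa [hk.ne', sub_eq_zero, eq_comm] using this

noncomputable def renewalSeq (g : ℕ → ℝ) (n : ℕ) : ℝ := coeff n (1 - mk g)⁻¹

noncomputable def renewalTail (g : ℕ → ℝ) (n : ℕ) : ℝ := 1 - ∑ k ∈ range (n + 1), g k

section Renewal

variable {g : ℕ → ℝ}

theorem mk_renewalSeq : mk (renewalSeq g) = (1 - mk g)⁻¹ := by
  ext n; simp [renewalSeq]

theorem constantCoeff_one_sub_mk (hg0 : g 0 = 0) : constantCoeff (1 - mk g) ≠ 0 := by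
  simp [hg0]

theorem renewalSeq_eq_sum (hg0 : g 0 = 0) {n : ℕ} (hn : 0 < n) :
    renewalSeq g n = ∑ m ∈ range (n + 1), renewalSeq g (n - m) * g m := by
  have h : mk (renewalSeq g) = mk (coeff · 1) + mk g * mk (renewalSeq g) := by
    rw [show mk (coeff · 1) = 1 from ext fun _ => coeff_mk _ _, mk_renewalSeq,
      ← sub_eq_iff_eq_add, ← one_sub_mul,
      PowerSeries.mul_inv_cancel _ (constantCoeff_one_sub_mk hg0)]
  rw [PowerSeries.mk_eq_add_mk_mul_iff] at h
  simpa [coeff_one, hn.ne'] using h n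

theorem eq_sum_mul_renewalSeq {h x : ℕ → ℝ} (hg0 : g 0 = 0)
    (hren : ∀ n, x n = h n + ∑ m ∈ range (n + 1), x (n - m) * g m) (n : ℕ) :
    x n = ∑ k ∈ range (n + 1), h k * renewalSeq g (n - k) := by
  rw [← PowerSeries.mk_eq_add_mk_mul_iff, ← sub_eq_iff_eq_add, ← one_sub_mul] at hren
  have hx : mk x = mk h * mk (renewalSeq g) := by
    rw [mk_renewalSeq, PowerSeries.eq_mul_inv_iff_mul_eq (constantCoeff_one_sub_mk hg0),
      mul_comm, hren]
  simpa [coeff_mul, Nat.sum_antidiagonal_eq_sum_range_succ_mk] using congrArg (coeff n) hx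

theorem sum_renewalTail_mul_renewalSeq (hg0 : g 0 = 0) (n : ℕ) :
    ∑ k ∈ range (n + 1), renewalTail g k * renewalSeq g (n - k) = 1 := by
  have htail : mk (renewalTail g) * (1 - X) = 1 - mk g := by
    ext (_ | n) <;> simp [renewalTail, mul_sub, sum_range_succ _ (n + 1)]
  have h : mk (renewalTail g) * mk (renewalSeq g) = mk 1 :=
    calc mk (renewalTail g) * mk (renewalSeq g)
        = mk (renewalTail g) * (1 - X) * mk 1 * mk (renewalSeq g) := by
          rw [mul_assoc _ (1 - X), mul_comm (1 - X), mk_one_mul_one_sub_eq_one, mul_one]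
      _ = mk 1 * ((1 - mk g) * (1 - mk g)⁻¹) := by
          rw [htail, mk_renewalSeq]; ring
      _ = mk 1 := by
          rw [PowerSeries.mul_inv_cancel _ (constantCoeff_one_sub_mk hg0), mul_one]
  simpa [coeff_mul, Nat.sum_antidiagonal_eq_sum_range_succ_mk] using congrArg (coeff n) h

theorem renewalSeq_nonneg (hgnn : ∀ n, 0 ≤ g n) (hg0 : g 0 = 0) (n : ℕ) :
    0 ≤ renewalSeq g n := by
  induction n using Nat.strong_induction_on with
  | _ n ih =>
    rcases Nat.eq_zero_or_pos n with rfl | hn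
    · simp [renewalSeq, hg0]
    rw [renewalSeq_eq_sum hg0 hn]
    refine sum_nonneg fun m hm => ?_
    rcases Nat.eq_zero_or_pos m with rfl | hm0
    · simp [hg0]
    · exact mul_nonneg (ih _ (by omega)) (hgnn m)

theorem renewalTail_nonneg (hgnn : ∀ n, 0 ≤ g n) (hg : HasSum g 1) (n : ℕ) :
    0 ≤ renewalTail g n :=
  sub_nonneg.2 (hg.tsum_eq ▸ hg.summable.sum_le_tsum _ fun k _ => hgnn k)

theorem renewalSeq_le_one (hgnn : ∀ n, 0 ≤ g n) (hg0 : g 0 = 0) (hg : HasSum g 1) (n : ℕ) :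
    renewalSeq g n ≤ 1 := by
  have h := sum_renewalTail_mul_renewalSeq hg0 n
  rw [sum_range_succ', Nat.sub_zero] at h
  have hrest : 0 ≤ ∑ k ∈ range n, renewalTail g (k + 1) * renewalSeq g (n - (k + 1)) :=
    sum_nonneg fun k _ =>
      mul_nonneg (renewalTail_nonneg hgnn hg _) (renewalSeq_nonneg hgnn hg0 _)
  have hr0 : renewalTail g 0 = 1 := by simp [renewalTail, hg0]
  rw [hr0, one_mul] at h
  linarith

theorem sum_range_renewalTail (K : ℕ) :
    ∑ i ∈ range K, renewalTail g i = ∑ n ∈ range (K + 1), n * g n + K * renewalTail g K := by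
  induction K with
  | zero => simp
  | succ K ih =>
    rw [sum_range_succ, ih, sum_range_succ _ (K + 1)]
    simp only [renewalTail, sum_range_succ _ (K + 1)]
    push_cast; ring

theorem hasSum_renewalTail (hgnn : ∀ n, 0 ≤ g n) (hg : HasSum g 1)
    (hmean : Summable fun n : ℕ => (n : ℝ) * g n) :
    HasSum (renewalTail g) (∑' n : ℕ, (n : ℝ) * g n) := by
  set m := ∑' n : ℕ, (n : ℝ) * g n
  have hM : Tendsto (fun K => ∑ n ∈ range (K + 1), (n : ℝ) * g n) atTop (𝓝 m) :=
    hmean.hasSum.tendsto_sum_nat.comp (tendsto_add_atTop_nat 1)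
  -- `K rₖ = ∑_{n > K} K gₙ` is dominated by the tail `∑_{n > K} n gₙ` of the mean
  have hbound (K : ℕ) : K * renewalTail g K ≤ m - ∑ n ∈ range (K + 1), (n : ℝ) * g n := by
    have hr : renewalTail g K = ∑' j, g (j + (K + 1)) := by
      rw [renewalTail, ← hg.tsum_eq, ← hg.summable.sum_add_tsum_nat_add (K + 1),
        add_sub_cancel_left]
    rw [hr, ← tsum_mul_left, show m = _ from (hmean.sum_add_tsum_nat_add (K + 1)).symm,
      add_sub_cancel_left]
    refine Summable.tsum_le_tsum (fun j => ?_)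
      (((summable_nat_add_iff _).2 hg.summable).mul_left _) ((summable_nat_add_iff _).2 hmean)
    exact mul_le_mul_of_nonneg_right (by push_cast; linarith [j.cast_nonneg (α := ℝ)]) (hgnn _)
  have hKr : Tendsto (fun K : ℕ => K * renewalTail g K) atTop (𝓝 0) :=
    squeeze_zero (fun K => mul_nonneg K.cast_nonneg (renewalTail_nonneg hgnn hg K)) hbound
      (by simpa using hM.const_sub m)
  rw [hasSum_iff_tendsto_nat_of_nonneg (renewalTail_nonneg hgnn hg)]
  simpa [sum_range_renewalTail] using hM.add hKr

theorem exists_tendsto_renewalSeq_shift (hgnn : ∀ n, 0 ≤ g n) (hg0 : g 0 = 0) (hg : HasSum g 1)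
    (hper : Nat.setGcd {n | 0 < g n} = 1) {c : ℝ}
    (hc : IsGreatest {x | MapClusterPt x atTop (renewalSeq g)} c ∨
      IsLeast {x | MapClusterPt x atTop (renewalSeq g)} c) :
    ∃ ω : ℕ → ℕ, Tendsto ω atTop atTop ∧
      ∀ i, Tendsto (fun ν => renewalSeq g (ω ν - i)) atTop (𝓝 c) := by
  have hu (n : ℕ) : renewalSeq g n ∈ Set.Icc 0 1 :=
    ⟨renewalSeq_nonneg hgnn hg0 n, renewalSeq_le_one hgnn hg0 hg n⟩
  obtain ⟨φ, hφ, hφc⟩ :=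
    (hc.elim (·.1) (·.1) : MapClusterPt c atTop (renewalSeq g)).tendsto_subseq
  obtain ⟨σ, hσ, w, hw⟩ := exists_subseq_tendsto_shifts hu φ
  have hθ : Tendsto (fun ν => φ (σ ν)) atTop atTop := (hφ.comp hσ).tendsto_atTop
  have hw0 : w 0 = c := tendsto_nhds_unique (hw 0) (hφc.comp hσ.tendsto_atTop)
  have hwc (j : ℕ) : MapClusterPt (w j) atTop (renewalSeq g) :=
    (hw j).mapClusterPt.of_comp ((tendsto_sub_atTop_nat j).comp hθ)
  have hwb (j : ℕ) : |w j| ≤ 1 := by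
    have := isClosed_Icc.mem_of_tendsto (hw j) (Eventually.of_forall fun ν => hu _)
    exact abs_le.2 ⟨by linarith [this.1], this.2⟩
  have hharm := eq_tsum_mul_shift_of_tendsto hg.summable (fun n hn => renewalSeq_eq_sum hg0 hn)
    (fun n => abs_le.2 ⟨by linarith [(hu n).1], (hu n).2⟩) hθ hw
  have hstep : ∀ j, w j = c → ∀ s ∈ {n | 0 < g n}, w (j + s) = c := by
    intro j hj s hs
    rcases hc with hc | hc
    · exact eq_of_tsum_mul_shift_eq_of_le hgnn hg hharm hwb (fun i => hc.2 (hwc i)) hj hs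
    · refine neg_inj.1 (eq_of_tsum_mul_shift_eq_of_le hgnn hg (w := -w) (fun i => ?_)
        (by simpa using hwb) (fun i => neg_le_neg (hc.2 (hwc i))) (by simp [hj]) hs)
      simp [hharm i, tsum_neg]
  obtain ⟨N, hN⟩ := eventually_atTop.1
    (Nat.eventually_mem_of_add_mem (A := {j | w j = c}) hper hw0 hstep)
  refine ⟨fun ν => φ (σ ν) - N, (tendsto_sub_atTop_nat N).comp hθ, fun i => ?_⟩
  have hNi : w (N + i) = c := hN (N + i) (by omega)
  simpa [Nat.sub_sub, hNi] using hw (N + i)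

theorem mul_tsum_eq_one_of_tendsto_renewalSeq_shift (hgnn : ∀ n, 0 ≤ g n) (hg0 : g 0 = 0)
    (hg : HasSum g 1) (hmean : Summable fun n : ℕ => (n : ℝ) * g n) {ω : ℕ → ℕ} {c : ℝ}
    (hω : Tendsto ω atTop atTop)
    (hc : ∀ i, Tendsto (fun ν => renewalSeq g (ω ν - i)) atTop (𝓝 c)) :
    c * ∑' n : ℕ, (n : ℝ) * g n = 1 := by
  set m := ∑' n : ℕ, (n : ℝ) * g n
  have hr : HasSum (renewalTail g) m := hasSum_renewalTail hgnn hg hmean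
  have hsplit (K n : ℕ) (hKn : K ≤ n + 1) :
      1 - ∑ k ∈ range K, renewalTail g k * renewalSeq g (n - k) ∈
        Set.Icc 0 (m - ∑ k ∈ range K, renewalTail g k) := by
    rw [← sum_renewalTail_mul_renewalSeq hg0 n, ← sum_range_add_sum_Ico _ hKn,
      add_sub_cancel_left]
    refine ⟨sum_nonneg fun k _ => mul_nonneg (renewalTail_nonneg hgnn hg k)
      (renewalSeq_nonneg hgnn hg0 _), ?_⟩
    calc ∑ k ∈ Ico K (n + 1), renewalTail g k * renewalSeq g (n - k)
        ≤ ∑ k ∈ Ico K (n + 1), renewalTail g k :=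
          sum_le_sum fun k _ => mul_le_of_le_one_right (renewalTail_nonneg hgnn hg k)
            (renewalSeq_le_one hgnn hg0 hg _)
      _ ≤ m - ∑ k ∈ range K, renewalTail g k := by
          rw [le_sub_iff_add_le', sum_range_add_sum_Ico _ hKn, ← hr.tsum_eq]
          exact hr.summable.sum_le_tsum _ fun k _ => renewalTail_nonneg hgnn hg k
  have hK (K : ℕ) : 1 - c * ∑ k ∈ range K, renewalTail g k ∈
      Set.Icc 0 (m - ∑ k ∈ range K, renewalTail g k) := by
    refine isClosed_Icc.mem_of_tendsto ?_
      ((hω.eventually_ge_atTop K).mono fun ν hν => hsplit K (ω ν) (by omega))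
    rw [mul_sum]
    simp_rw [mul_comm c]
    exact tendsto_const_nhds.sub (tendsto_finsetSum _ fun k _ => (hc k).const_mul _)
  have hS := hr.tendsto_sum_nat
  have h1 := le_of_tendsto_of_tendsto' (tendsto_const_nhds.sub (hS.const_mul c))
    (tendsto_const_nhds.sub hS) fun K => (hK K).2
  have h2 := ge_of_tendsto' (tendsto_const_nhds.sub (hS.const_mul c)) fun K => (hK K).1
  linarith

theorem tendsto_renewalSeq (hgnn : ∀ n, 0 ≤ g n) (hg0 : g 0 = 0) (hg : HasSum g 1)
    (hper : Nat.setGcd {n | 0 < g n} = 1) (hmean : Summable fun n : ℕ => (n : ℝ) * g n) :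
    Tendsto (renewalSeq g) atTop (𝓝 (∑' n : ℕ, (n : ℝ) * g n)⁻¹) := by
  have hle : IsBoundedUnder (· ≤ ·) atTop (renewalSeq g) :=
    isBoundedUnder_of ⟨1, renewalSeq_le_one hgnn hg0 hg⟩
  have hge : IsBoundedUnder (· ≥ ·) atTop (renewalSeq g) :=
    isBoundedUnder_of ⟨0, renewalSeq_nonneg hgnn hg0⟩
  have hextremal {c : ℝ} (hc : IsGreatest {x | MapClusterPt x atTop (renewalSeq g)} c ∨
      IsLeast {x | MapClusterPt x atTop (renewalSeq g)} c) :
      c = (∑' n : ℕ, (n : ℝ) * g n)⁻¹ :=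
    let ⟨_, hω, hωc⟩ := exists_tendsto_renewalSeq_shift hgnn hg0 hg hper hc
    eq_inv_of_mul_eq_one_left
      (mul_tsum_eq_one_of_tendsto_renewalSeq_shift hgnn hg0 hg hmean hω hωc)
  exact tendsto_of_liminf_eq_limsup
    (hextremal (.inr (isLeast_mapClusterPt_liminf hle.isCoboundedUnder_ge hge)))
    (hextremal (.inl (isGreatest_mapClusterPt_limsup hge.isCoboundedUnder_le hle))) hle hge

end Renewal

theorem discrete_renewal_theorem_general
    (g h x : ℕ → ℝ)
    (hgnn : ∀ n, 0 ≤ g n)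
    (hg0 : g 0 = 0)
    (hgsum : Summable g) (hproper : ∑' n, g n = 1)
    (hper : ∀ d : ℕ, 1 < d → ∃ n, 0 < g n ∧ ¬ d ∣ n)
    (hmean : Summable fun n : ℕ => (n : ℝ) * g n)
    (hhsum : Summable h)
    (hren : ∀ n : ℕ, x n = h n + ∑ m ∈ range (n + 1), x (n - m) * g m) :
    Tendsto x atTop (nhds ((∑' m : ℕ, h m) / ∑' n : ℕ, (n : ℝ) * g n)) := by
  have hg : HasSum g 1 := hproper ▸ hgsum.hasSum
  have hu := tendsto_renewalSeq hgnn hg0 hg (Nat.setGcd_eq_one_of_forall_not_dvd hper) hmean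
  rw [funext (eq_sum_mul_renewalSeq hg0 hren), div_eq_mul_inv, ← tsum_mul_right]
  exact tendsto_sum_range_mul hhsum tendsto_id (fun k => hu.comp (tendsto_sub_atTop_nat k))
    fun n k => abs_le.2 ⟨by linarith [renewalSeq_nonneg hgnn hg0 (n - k)],
      renewalSeq_le_one hgnn hg0 hg _⟩

theorem discrete_renewal_theorem
    (g h x : ℕ → ℝ)
    (hgnn : ∀ n, 0 ≤ g n) (hhnn : ∀ n, 0 ≤ h n) (hxnn : ∀ n, 0 ≤ x n)
    (hg0 : g 0 = 0)
    (hgsum : Summable g) (hproper : ∑' n, g n = 1)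
    (hper : ∀ d : ℕ, 1 < d → ∃ n, 0 < g n ∧ ¬ d ∣ n)
    (hmean : Summable fun n : ℕ => (n : ℝ) * g n)
    (hhsum : Summable h)
    (hbdd : ∃ C : ℝ, ∀ n, x n ≤ C)
    (hren : ∀ n : ℕ, x n = h n + ∑ m ∈ range (n + 1), x (n - m) * g m) :
    Tendsto x atTop (nhds ((∑' m : ℕ, h m) / ∑' n : ℕ, (n : ℝ) * g n)) :=
  discrete_renewal_theorem_general g h x hgnn hg0 hgsum hproper hper hmean hhsum hren
end
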